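/- arXiv:2104.01954 — 3 statements merged into one kernel-verified Lean document; each statement's English description precedes it below -/
import Mathlib

section
/- Let G be a complete K-partite graph with parts U_1,...,U_K each of size C, and nonnegative edge weights. Define a greedy pairwise matching procedure: at each step, choose an orthogonal matching between the merged part and the next part achieving weight at least a 1/C fraction of the cross edge weight between them, merge along this matching (summing weights of parallel edges into the remaining parts). Then the resulting orthogonal clique partition Φ satisfies w(Φ) ≥ w(G)/C, where w(Φ) is the total weight of edges inside the cliques of Φ and w(G) is the total edge weight. -/
open Finset

/-- Greedy pairwise matching on a complete K-partite graph with parts of size C: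
if at every merge step k the chosen matching (clique c in the merged hypothesis gets
matched to vertex Φ k c of part k) has weight at least a 1/C fraction of the total
cross edge weight between the merged part and part k, then the resulting orthogonal
clique partition Φ has weight at least w(G)/C. -/
theorem stmt_4 (K C : ℕ) (w : Fin K × Fin C → Fin K × Fin C → ℝ)
    (hw : ∀ a b, 0 ≤ w a b)
    (Φ : Fin K → Fin C ≃ Fin C)
    (hgreedy : ∀ k : Fin K,
      (1 / (C : ℝ)) * (∑ c : Fin C, ∑ j : Fin C, ∑ κ ∈ Finset.Iio k, w (κ, Φ κ c) (k, j)) ≤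
        ∑ c : Fin C, ∑ κ ∈ Finset.Iio k, w (κ, Φ κ c) (k, Φ k c)) :
    (∑ k : Fin K, ∑ κ ∈ Finset.Ioi k, ∑ i : Fin C, ∑ j : Fin C, w (k, i) (κ, j)) / C ≤
      ∑ c : Fin C, ∑ k : Fin K, ∑ κ ∈ Finset.Ioi k, w (k, Φ k c) (κ, Φ κ c) := by
  have hswap : ∀ f : Fin K → Fin K → ℝ,
      ∑ k : Fin K, ∑ κ ∈ Finset.Ioi k, f k κ = ∑ k : Fin K, ∑ κ ∈ Finset.Iio k, f κ k := by
    intro f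
    rw [Finset.sum_comm' (t' := (Finset.univ : Finset (Fin K)))
      (s' := fun k => Finset.Iio k)]
    intro x y
    simp [and_comm]
  have hsum := Finset.sum_le_sum (s := (Finset.univ : Finset (Fin K)))
    (fun k _ => hgreedy k)
  -- rewrite the LHS of the summed greedy inequality
  have hL : ∑ k : Fin K, (1 / (C : ℝ)) *
        (∑ c : Fin C, ∑ j : Fin C, ∑ κ ∈ Finset.Iio k, w (κ, Φ κ c) (k, j)) =
      (∑ k : Fin K, ∑ κ ∈ Finset.Ioi k, ∑ i : Fin C, ∑ j : Fin C, w (k, i) (κ, j)) / C := by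
    rw [hswap fun k κ => ∑ i : Fin C, ∑ j : Fin C, w (k, i) (κ, j)]
    rw [← Finset.mul_sum, one_div, inv_mul_eq_div]
    congr 1
    refine Finset.sum_congr rfl fun k _ => ?_
    calc ∑ c : Fin C, ∑ j : Fin C, ∑ κ ∈ Finset.Iio k, w (κ, Φ κ c) (k, j)
        = ∑ c : Fin C, ∑ κ ∈ Finset.Iio k, ∑ j : Fin C, w (κ, Φ κ c) (k, j) :=
          Finset.sum_congr rfl fun c _ => Finset.sum_comm
      _ = ∑ κ ∈ Finset.Iio k, ∑ c : Fin C, ∑ j : Fin C, w (κ, Φ κ c) (k, j) :=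
          Finset.sum_comm
      _ = ∑ κ ∈ Finset.Iio k, ∑ i : Fin C, ∑ j : Fin C, w (κ, i) (k, j) :=
          Finset.sum_congr rfl fun κ _ =>
            Equiv.sum_comp (Φ κ) (fun i => ∑ j : Fin C, w (κ, i) (k, j))
  have hR : ∑ k : Fin K, ∑ c : Fin C, ∑ κ ∈ Finset.Iio k, w (κ, Φ κ c) (k, Φ k c) =
      ∑ c : Fin C, ∑ k : Fin K, ∑ κ ∈ Finset.Ioi k, w (k, Φ k c) (κ, Φ κ c) := by
    rw [Finset.sum_comm]
    exact Finset.sum_congr rfl fun c _ =>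
      (hswap fun k κ => w (k, Φ k c) (κ, Φ κ c)).symm
  calc (∑ k : Fin K, ∑ κ ∈ Finset.Ioi k, ∑ i : Fin C, ∑ j : Fin C, w (k, i) (κ, j)) / C
      = ∑ k : Fin K, (1 / (C : ℝ)) *
        (∑ c : Fin C, ∑ j : Fin C, ∑ κ ∈ Finset.Iio k, w (κ, Φ κ c) (k, j)) := hL.symm
    _ ≤ ∑ k : Fin K, ∑ c : Fin C, ∑ κ ∈ Finset.Iio k, w (κ, Φ κ c) (k, Φ k c) := hsum
    _ = _ := hR
end

section
/- Let G be a complete K-partite graph with parts U_1,...,U_K each of size C and nonnegative edge weights. Let ψ be a perfect matching between U_1 and U_2, and let G' be the graph obtained by merging each matched pair into a single vertex, where the weight of an edge from a merged vertex {u,v} to a vertex x in any other part is w(u,x) + w(v,x), and edges among parts U_3,...,U_K keep their weights. Then for any orthogonal clique partition Φ' of G', the corresponding partition Φ of G (un-merging the pairs) satisfies w(Φ) = w(ψ) + w(Φ'). -/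
open Finset

lemma stmt7_aux {K : ℕ} (f : Fin (K + 2) → Fin (K + 2) → ℝ) :
    ∑ k : Fin (K + 2), ∑ κ ∈ Finset.Ioi k, f k κ =
      f 0 1 + (∑ κ ∈ Finset.Ioi (1 : Fin (K + 2)), (f 0 κ + f 1 κ)) +
        ∑ k ∈ Finset.Ioi (1 : Fin (K + 2)), ∑ κ ∈ Finset.Ioi k, f k κ := by
  have h1 : (1 : Fin (K + 2)) ∉ Finset.Ioi (1 : Fin (K + 2)) := by simp
  have h0 : (0 : Fin (K + 2)) ∉ insert 1 (Finset.Ioi (1 : Fin (K + 2))) := by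
    simp [Fin.ext_iff, Fin.lt_def, Fin.val_zero, Fin.val_one]
  have huniv : (Finset.univ : Finset (Fin (K + 2))) =
      insert 0 (insert 1 (Finset.Ioi 1)) := by
    ext x
    simp only [Finset.mem_univ, Finset.mem_insert, Finset.mem_Ioi, true_iff,
      Fin.ext_iff, Fin.lt_def, Fin.val_zero, Fin.val_one]
    omega
  have hIoi0 : Finset.Ioi (0 : Fin (K + 2)) = insert 1 (Finset.Ioi 1) := by
    ext x
    simp only [Finset.mem_insert, Finset.mem_Ioi, Fin.ext_iff, Fin.lt_def, Fin.val_zero, Fin.val_one]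
    omega
  rw [huniv, Finset.sum_insert h0, Finset.sum_insert h1, hIoi0,
    Finset.sum_insert h1, Finset.sum_add_distrib]
  ring

/-- Merging a perfect matching ψ between parts 0 and 1 of a complete (K+2)-partite
graph: for any orthogonal clique partition Φ' of the merged graph G' (encoded by Φ
with the constraint that part 1's assignment follows part 0's through ψ), the weight
of the corresponding (un-merged) partition Φ of G equals w(ψ) + w(Φ'), where w(Φ')
uses the merged edge weights w(u,x) + w(v,x). -/
theorem stmt_7 (K C : ℕ)
    (w : Fin (K + 2) × Fin C → Fin (K + 2) × Fin C → ℝ) (hw : ∀ a b, 0 ≤ w a b)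
    (ψ : Fin C ≃ Fin C) (Φ : Fin (K + 2) → Fin C ≃ Fin C)
    (hmerge : Φ 1 = (Φ 0).trans ψ) :
    (∑ c : Fin C, ∑ k : Fin (K + 2), ∑ κ ∈ Finset.Ioi k, w (k, Φ k c) (κ, Φ κ c)) =
      (∑ i : Fin C, w (0, i) (1, ψ i)) +
      ((∑ c : Fin C, ∑ k ∈ Finset.Ioi (1 : Fin (K + 2)),
          (w (0, Φ 0 c) (k, Φ k c) + w (1, Φ 1 c) (k, Φ k c))) +
        ∑ c : Fin C, ∑ k ∈ Finset.Ioi (1 : Fin (K + 2)), ∑ κ ∈ Finset.Ioi k,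
          w (k, Φ k c) (κ, Φ κ c)) := by
  have hmatch : ∑ c : Fin C, w (0, Φ 0 c) (1, Φ 1 c) = ∑ i : Fin C, w (0, i) (1, ψ i) := by
    rw [hmerge]
    exact Equiv.sum_comp (Φ 0) (fun i => w (0, i) (1, ψ i))
  calc (∑ c : Fin C, ∑ k : Fin (K + 2), ∑ κ ∈ Finset.Ioi k, w (k, Φ k c) (κ, Φ κ c))
      = ∑ c : Fin C, (w (0, Φ 0 c) (1, Φ 1 c) +
          (∑ k ∈ Finset.Ioi (1 : Fin (K + 2)),
            (w (0, Φ 0 c) (k, Φ k c) + w (1, Φ 1 c) (k, Φ k c))) +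
          ∑ k ∈ Finset.Ioi (1 : Fin (K + 2)), ∑ κ ∈ Finset.Ioi k,
            w (k, Φ k c) (κ, Φ κ c)) := by
        refine Finset.sum_congr rfl fun c _ => ?_
        exact stmt7_aux (fun k κ => w (k, Φ k c) (κ, Φ κ c))
    _ = _ := by
        rw [Finset.sum_add_distrib, Finset.sum_add_distrib, hmatch]
        ring
end

section
/- Let G be a complete K-partite graph with parts of size C and nonnegative edge weights, and let Φ* be a maximum-weight orthogonal clique partition. Then w(Φ*) ≥ w(G)/C. -/
open Finset

lemma step_11 {K C : ℕ} (k κ : Fin K) (h : κ ≠ k) (c d e : Fin C)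
    (f : Fin C → Fin C → ℝ) :
    ∑ Φ : Fin K → Equiv.Perm (Fin C), f (Φ k c) (Φ κ e)
      = ∑ Φ : Fin K → Equiv.Perm (Fin C), f (Φ k d) (Φ κ e) := by
  have hbij : Function.Bijective
      (fun Φ : Fin K → Equiv.Perm (Fin C) =>
        Function.update Φ k (Φ k * Equiv.swap c d)) := by
    apply Function.Involutive.bijective
    intro Φ
    funext j
    rcases eq_or_ne j k with rfl | hj
    · simp [Function.update_self, mul_assoc]
    · simp [Function.update_of_ne hj]
  refine (Fintype.sum_bijective _ hbij
    (fun Φ => f (Φ k d) (Φ κ e)) (fun Φ => f (Φ k c) (Φ κ e)) ?_).symm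
  intro Φ
  simp [Function.update_self, Function.update_of_ne h, Equiv.Perm.mul_apply]

lemma step2_11 {K C : ℕ} (k κ : Fin K) (h : k ≠ κ) (c d e : Fin C)
    (f : Fin C → Fin C → ℝ) :
    ∑ Φ : Fin K → Equiv.Perm (Fin C), f (Φ k c) (Φ κ c)
      = ∑ Φ : Fin K → Equiv.Perm (Fin C), f (Φ k d) (Φ κ e) := by
  rw [step_11 k κ h.symm c d c f]
  exact step_11 κ k h c e d (fun j i => f i j)

lemma key_11 {K C : ℕ} (k κ : Fin K) (h : k ≠ κ) (c : Fin C)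
    (f : Fin C → Fin C → ℝ) :
    (C : ℝ) * (C : ℝ) * ∑ Φ : Fin K → Equiv.Perm (Fin C), f (Φ k c) (Φ κ c)
      = (Fintype.card (Fin K → Equiv.Perm (Fin C)) : ℝ) * ∑ i, ∑ j, f i j := by
  have h1 : (C : ℝ) * (C : ℝ) * ∑ Φ : Fin K → Equiv.Perm (Fin C), f (Φ k c) (Φ κ c)
      = ∑ d : Fin C, ∑ e : Fin C, ∑ Φ : Fin K → Equiv.Perm (Fin C), f (Φ k d) (Φ κ e) := by
    rw [show (∑ d : Fin C, ∑ e : Fin C, ∑ Φ : Fin K → Equiv.Perm (Fin C), f (Φ k d) (Φ κ e))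
        = ∑ d : Fin C, ∑ e : Fin C, ∑ Φ : Fin K → Equiv.Perm (Fin C), f (Φ k c) (Φ κ c) from
      Finset.sum_congr rfl fun d _ => Finset.sum_congr rfl fun e _ =>
        (step2_11 k κ h c d e f).symm]
    simp [Finset.sum_const, mul_assoc]
  rw [h1]
  calc (∑ d : Fin C, ∑ e : Fin C, ∑ Φ : Fin K → Equiv.Perm (Fin C), f (Φ k d) (Φ κ e))
      = ∑ d : Fin C, ∑ Φ : Fin K → Equiv.Perm (Fin C), ∑ e : Fin C, f (Φ k d) (Φ κ e) :=
        Finset.sum_congr rfl fun d _ => Finset.sum_comm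
    _ = ∑ Φ : Fin K → Equiv.Perm (Fin C), ∑ d : Fin C, ∑ e : Fin C, f (Φ k d) (Φ κ e) :=
        Finset.sum_comm
    _ = ∑ Φ : Fin K → Equiv.Perm (Fin C), ∑ i, ∑ j, f i j := by
        refine Finset.sum_congr rfl fun Φ _ => ?_
        rw [show (∑ d : Fin C, ∑ e : Fin C, f (Φ k d) (Φ κ e))
            = ∑ d : Fin C, ∑ j, f (Φ k d) j from
          Finset.sum_congr rfl fun d _ => Equiv.sum_comp (Φ κ) (f (Φ k d))]
        exact Equiv.sum_comp (Φ k) (fun i => ∑ j, f i j)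
    _ = (Fintype.card (Fin K → Equiv.Perm (Fin C)) : ℝ) * ∑ i, ∑ j, f i j := by
        simp [Finset.sum_const, Finset.card_univ, nsmul_eq_mul]

/-- Averaging over all orthogonal clique partitions: the maximum-weight orthogonal
clique partition Φ* of a complete K-partite graph with parts of size C and
nonnegative weights satisfies w(Φ*) ≥ w(G)/C. -/
theorem stmt_11 (K C : ℕ) (w : Fin K × Fin C → Fin K × Fin C → ℝ)
    (hw : ∀ a b, 0 ≤ w a b)
    (Φstar : Fin K → Fin C ≃ Fin C)
    (hmax : ∀ Φ : Fin K → Fin C ≃ Fin C,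
      (∑ c : Fin C, ∑ k : Fin K, ∑ κ ∈ Finset.Ioi k, w (k, Φ k c) (κ, Φ κ c)) ≤
      ∑ c : Fin C, ∑ k : Fin K, ∑ κ ∈ Finset.Ioi k, w (k, Φstar k c) (κ, Φstar κ c)) :
    (∑ k : Fin K, ∑ κ ∈ Finset.Ioi k, ∑ i : Fin C, ∑ j : Fin C, w (k, i) (κ, j)) / C ≤
      ∑ c : Fin C, ∑ k : Fin K, ∑ κ ∈ Finset.Ioi k, w (k, Φstar k c) (κ, Φstar κ c) := by
  rcases Nat.eq_zero_or_pos C with rfl | hC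
  · simp
  have hCpos : (0:ℝ) < C := by exact_mod_cast hC
  set N : ℝ := (Fintype.card (Fin K → Equiv.Perm (Fin C)) : ℝ) with hNdef
  have hN : 0 < N := by
    rw [hNdef]
    exact_mod_cast Fintype.card_pos (α := Fin K → Equiv.Perm (Fin C))
  set M : ℝ := ∑ c : Fin C, ∑ k : Fin K, ∑ κ ∈ Finset.Ioi k, w (k, Φstar k c) (κ, Φstar κ c)
    with hMdef
  set T : ℝ := ∑ k : Fin K, ∑ κ ∈ Finset.Ioi k, ∑ i : Fin C, ∑ j : Fin C, w (k, i) (κ, j)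
    with hTdef
  set S : ℝ := ∑ Φ : Fin K → Equiv.Perm (Fin C),
      ∑ c : Fin C, ∑ k : Fin K, ∑ κ ∈ Finset.Ioi k, w (k, Φ k c) (κ, Φ κ c) with hSdef
  have hS : S ≤ N * M := by
    calc S ≤ ∑ _Φ : Fin K → Equiv.Perm (Fin C), M :=
          Finset.sum_le_sum fun Φ _ => hmax Φ
      _ = N * M := by
          rw [Finset.sum_const, Finset.card_univ, nsmul_eq_mul]
  have hswap : S = ∑ c : Fin C, ∑ k : Fin K, ∑ κ ∈ Finset.Ioi k,
      ∑ Φ : Fin K → Equiv.Perm (Fin C), w (k, Φ k c) (κ, Φ κ c) := by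
    rw [hSdef, Finset.sum_comm]
    refine Finset.sum_congr rfl fun c _ => ?_
    rw [Finset.sum_comm]
    exact Finset.sum_congr rfl fun k _ => Finset.sum_comm
  have hCS : (C:ℝ) * (C:ℝ) * S = (C:ℝ) * (N * T) := by
    calc (C:ℝ) * (C:ℝ) * S
        = ∑ c : Fin C, ∑ k : Fin K, ∑ κ ∈ Finset.Ioi k,
            ((C:ℝ) * (C:ℝ) * ∑ Φ : Fin K → Equiv.Perm (Fin C),
              w (k, Φ k c) (κ, Φ κ c)) := by
          rw [hswap]; simp_rw [Finset.mul_sum]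
      _ = ∑ c : Fin C, ∑ k : Fin K, ∑ κ ∈ Finset.Ioi k,
            (N * ∑ i : Fin C, ∑ j : Fin C, w (k, i) (κ, j)) := by
          refine Finset.sum_congr rfl fun c _ => Finset.sum_congr rfl fun k _ =>
            Finset.sum_congr rfl fun κ hκ => ?_
          exact key_11 k κ (Finset.mem_Ioi.mp hκ).ne c (fun i j => w (k, i) (κ, j))
      _ = (C:ℝ) * (N * T) := by
          simp_rw [← Finset.mul_sum]
          rw [Finset.sum_const, Finset.card_univ, nsmul_eq_mul, hTdef, Fintype.card_fin]
          ring
  have hTM : T ≤ (C:ℝ) * M := by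
    have h1 : (C:ℝ) * (C:ℝ) * S ≤ (C:ℝ) * (C:ℝ) * (N * M) := by
      have : (0:ℝ) ≤ (C:ℝ) * (C:ℝ) := by positivity
      exact mul_le_mul_of_nonneg_left hS this
    rw [hCS] at h1
    have hre : (C:ℝ) * (C:ℝ) * (N * M) = (C:ℝ) * (N * ((C:ℝ) * M)) := by ring
    rw [hre] at h1
    have h2 : N * T ≤ N * ((C:ℝ) * M) := le_of_mul_le_mul_left h1 hCpos
    exact le_of_mul_le_mul_left h2 hN
  rw [div_le_iff₀ hCpos]
  nlinarith
end
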